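/- In the setup below, the following identity of formal power series holds in ℤ[[t]]: det(id − t·τ_+^{-1}) = det(id − t·(τ_0|_{V_0})^{-1}) · ( g + t + Σ_{k≥0} (1 − g + Σ_{ℓ=0}^{k−1} ⟨e, τ_0^ℓ(e)⟩) t^k ). Equivalently, the quotient det(1 − τ_+^{-1}t)/det(1 − τ_0|_{V_0}^{-1}t) equals the Hilbert–Poincaré series P_{(V_0,e)}(t) := Σ_{k≥0} (1 − g + Σ_{ℓ=0}^{k−1} ⟨e, τ_0^ℓ(e)⟩) t^k plus g + t. -/

import Mathlib

/-!
Let `N` and `T` be the matrices of `τ₀|V₀` and `τ₊` in the given bases. They share the block `A`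
describing `τ₀` on `V₋` modulo `u`: since `τ₀` fixes `u`, `N` is block lower triangular and
`det (N - t) = det (A - t) (1 - t)`, while `T` borders `A` by the `2 × 2` block
`[[1 - g, 1], [1, 0]]` on `u, w`. The Schur complement of `A - t`, whose inverse is
`Σ_ℓ A^{-ℓ-1} t^ℓ`, yields `det (T - t) = -det (A - t) (1 + t (1 - g - t + Σ_ℓ ⟨e, τ₀^ℓ e⟩ t^ℓ))`:
the `u`-row of `N` is `-⟨·, e⟩` on `V₋`, and `⟨e, τ₀^{-ℓ} e⟩ = ⟨τ₀^ℓ e, e⟩` by isometry. Finally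
`det (1 - t M⁻¹) det M = det (M - t)` and `det T = -det N` (constant terms), and
`1 + t (1 - g - t + Σ_ℓ ⟨e, τ₀^ℓ e⟩ t^ℓ)` is `(1 - t)` times the claimed series.
-/

/-- The reflection `s_a(v) = v + ⟨v,a⟩a` in a root `a`. -/
def sRefl {V : Type*} [AddCommGroup V] [Module ℤ V]
    (B : V →ₗ[ℤ] V →ₗ[ℤ] ℤ) (a x : V) : V :=
  x + B x a • a

/-- The Eichler–Siegel transformation
`ψ_{u,e}(x) = x + ⟨x,u⟩e − ⟨x,e⟩u − ½⟨e,e⟩⟨x,u⟩u`. -/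
def esT {V : Type*} [AddCommGroup V] [Module ℤ V]
    (B : V →ₗ[ℤ] V →ₗ[ℤ] ℤ) (u e x : V) : V :=
  x + B x u • e - B x e • u - (B e e / 2 * B x u) • u

/-- The determinant of the endomorphism `id − t·f` of `ℤ[[t]] ⊗ V`, computed via
the matrix of `f` in the basis `b`, as an element of `ℤ[[t]]`. -/
noncomputable def detOneSubT {ι V : Type*} [Fintype ι] [DecidableEq ι]
    [AddCommGroup V] [Module ℤ V] (b : Module.Basis ι ℤ V) (f : V →ₗ[ℤ] V) :
    PowerSeries ℤ :=
  Matrix.det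
    (1 - (PowerSeries.X : PowerSeries ℤ) •
      (LinearMap.toMatrix b b f).map ((PowerSeries.C (R := ℤ))))

open PowerSeries

namespace Matrix

theorem toBlocks₁₁_mul_of_toBlocks₁₂_eq_zero {ι κ κ' μ R : Type*} [Fintype ι] [Fintype κ]
    [NonUnitalNonAssocSemiring R] {M : Matrix (ι ⊕ κ) (ι ⊕ κ) R} (hM : M.toBlocks₁₂ = 0)
    (M' : Matrix (ι ⊕ κ) (κ' ⊕ μ) R) :
    (M * M').toBlocks₁₁ = M.toBlocks₁₁ * M'.toBlocks₁₁ := by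
  ext i j
  have h0 : ∀ k, M (.inl i) (.inr k) = 0 := fun k => congrFun (congrFun hM i) k
  simp [toBlocks₁₁, mul_apply, Fintype.sum_sum_type, h0]

theorem toBlocks₁₁_pow_of_toBlocks₁₂_eq_zero {ι κ R : Type*} [Fintype ι] [DecidableEq ι]
    [Fintype κ] [DecidableEq κ] [Semiring R] {M : Matrix (ι ⊕ κ) (ι ⊕ κ) R}
    (hM : M.toBlocks₁₂ = 0) (n : ℕ) :
    (M ^ n).toBlocks₁₁ = M.toBlocks₁₁ ^ n := by
  induction n with
  | zero => ext i j; simp [toBlocks₁₁, one_apply]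
  | succ n ih => rw [pow_succ', toBlocks₁₁_mul_of_toBlocks₁₂_eq_zero hM, ih, pow_succ']

variable {ι κ R : Type*} [Fintype ι] [DecidableEq ι] [CommRing R]

def powerSeriesOfPowers (M : Matrix ι ι R) : Matrix ι ι R⟦X⟧ :=
  of fun i j => mk fun n => (M ^ n) i j

@[simp]
theorem coeff_powerSeriesOfPowers_apply (M : Matrix ι ι R) (i j : ι) (n : ℕ) :
    coeff n (M.powerSeriesOfPowers i j) = (M ^ n) i j := by
  rw [powerSeriesOfPowers, of_apply, coeff_mk]

theorem coeff_map_C_mul_powerSeriesOfPowers (A : Matrix κ ι R) (M : Matrix ι ι R)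
    (i : κ) (j : ι) (n : ℕ) :
    coeff n ((A.map C * M.powerSeriesOfPowers) i j) = (A * M ^ n) i j := by
  simp only [mul_apply, map_sum, map_apply, coeff_C_mul, coeff_powerSeriesOfPowers_apply]

theorem one_sub_X_smul_mul_powerSeriesOfPowers (M : Matrix ι ι R) :
    (1 - (X : R⟦X⟧) • M.map C) * M.powerSeriesOfPowers = 1 := by
  ext i j n
  rw [sub_mul, one_mul, smul_mul, sub_apply, smul_apply, smul_eq_mul, map_sub,
    coeff_powerSeriesOfPowers_apply]
  rcases n with _ | n
  · simp [one_apply]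
  · rw [coeff_succ_X_mul, coeff_map_C_mul_powerSeriesOfPowers, ← pow_succ', sub_self, one_apply]
    split_ifs <;> simp

theorem map_C_sub_X_smul_mul_eq_one {A A' : Matrix ι ι R} (h : A * A' = 1) :
    (A.map C - (X : R⟦X⟧) • 1) * (A'.powerSeriesOfPowers * A'.map C) = 1 := by
  have hfac : A.map C - (X : R⟦X⟧) • 1 = A.map C * (1 - (X : R⟦X⟧) • A'.map C) := by
    rw [mul_sub, mul_one, Matrix.mul_smul, ← Matrix.map_mul, h,
      Matrix.map_one _ (map_zero _) (map_one _)]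
  rw [hfac, mul_assoc, ← mul_assoc (1 - _), one_sub_X_smul_mul_powerSeriesOfPowers, one_mul,
    ← Matrix.map_mul, h, Matrix.map_one _ (map_zero _) (map_one _)]

theorem constantCoeff_det_map_C_sub_X_smul (M : Matrix ι ι R) :
    constantCoeff (det (M.map C - (X : R⟦X⟧) • 1)) = det M := by
  rw [RingHom.map_det]
  congr 1
  ext i j
  simp [one_apply, apply_ite]

theorem det_one_sub_X_smul_mul_C_det {M M' : Matrix ι ι R} (h : M' * M = 1) :
    det (1 - (X : R⟦X⟧) • M'.map C) * C (det M) = det (M.map C - (X : R⟦X⟧) • 1) := by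
  rw [RingHom.map_det, RingHom.mapMatrix_apply, ← det_mul, sub_mul, one_mul, smul_mul,
    ← Matrix.map_mul, h, Matrix.map_one _ (map_zero _) (map_one _)]

theorem det_one_sub_X_smul_mul_C_constantCoeff [Fintype κ] [DecidableEq κ]
    {T T' : Matrix ι ι R} {N N' : Matrix κ κ R} (hT : T' * T = 1) (hN : N' * N = 1) {Q : R⟦X⟧}
    (h : det (T.map C - (X : R⟦X⟧) • 1) = det (N.map C - (X : R⟦X⟧) • 1) * Q) :
    det (1 - (X : R⟦X⟧) • T'.map C) * C (constantCoeff Q) =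
      det (1 - (X : R⟦X⟧) • N'.map C) * Q := by
  have hdet : det T = det N * constantCoeff Q := by
    simpa only [map_mul, constantCoeff_det_map_C_sub_X_smul] using congrArg constantCoeff h
  have hunit : C (det N') * C (det N) = 1 := by
    rw [← map_mul, ← det_mul, hN, det_one, map_one]
  have hT' := det_one_sub_X_smul_mul_C_det hT
  rw [h, ← det_one_sub_X_smul_mul_C_det hN, hdet, map_mul] at hT'
  linear_combination C (det N') * hT' - (det (1 - (X : R⟦X⟧) • T'.map C) * C (constantCoeff Q) -
    det (1 - (X : R⟦X⟧) • N'.map C) * Q) * hunit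

theorem det_fromBlocks_zero₁₂_map_C_sub_X_smul [Fintype κ] [DecidableEq κ] (A : Matrix ι ι R)
    (Cm : Matrix κ ι R) (D : Matrix κ κ R) :
    det ((fromBlocks A 0 Cm D).map C - (X : R⟦X⟧) • 1) =
      det (A.map C - (X : R⟦X⟧) • 1) * det (D.map C - (X : R⟦X⟧) • 1) := by
  rw [fromBlocks_map, ← fromBlocks_one, fromBlocks_smul, ← det_fromBlocks_zero₁₂ _ (Cm.map C)]
  congr 1
  ext (i | i) (j | j) <;> simp

/-- Schur complement with respect to the block `A - X`, whose inverse is `Σ A'ⁿ⁺¹ Xⁿ`. -/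
theorem det_fromBlocks_map_C_sub_X_smul [Fintype κ] [DecidableEq κ] {A A' : Matrix ι ι R}
    (h : A * A' = 1) (B : Matrix ι κ R) (Cm : Matrix κ ι R) (D : Matrix κ κ R) :
    det ((fromBlocks A (A * B) Cm D).map C - (X : R⟦X⟧) • 1) =
      det (A.map C - (X : R⟦X⟧) • 1) *
        det (D.map C - (X : R⟦X⟧) • 1 - Cm.map C * A'.powerSeriesOfPowers * B.map C) := by
  let := invertibleOfRightInverse _ _ (map_C_sub_X_smul_mul_eq_one h)
  have hblocks : (fromBlocks A (A * B) Cm D).map C - (X : R⟦X⟧) • 1 =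
      fromBlocks (A.map C - (X : R⟦X⟧) • 1) ((A * B).map C) (Cm.map C)
        (D.map C - (X : R⟦X⟧) • 1) := by
    rw [fromBlocks_map, ← fromBlocks_one, fromBlocks_smul]
    ext (i | i) (j | j) <;> simp
  have hcancel : A'.powerSeriesOfPowers * A'.map C * (A * B).map C =
      A'.powerSeriesOfPowers * B.map C := by
    rw [Matrix.map_mul, Matrix.mul_assoc, ← Matrix.mul_assoc (A'.map C), ← Matrix.map_mul,
      mul_eq_one_comm.mp h, Matrix.map_one _ (map_zero _) (map_one _), Matrix.one_mul]
  rw [hblocks, det_fromBlocks₁₁, invOf_eq_right_inv (map_C_sub_X_smul_mul_eq_one h),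
    Matrix.mul_assoc (Cm.map C), hcancel, ← Matrix.mul_assoc]

theorem det_fin_two_sub_single_mul_powerSeriesOfPowers_mul_single (c : Matrix Unit ι R)
    (M : Matrix ι ι R) (o : ι) (a : R) :
    det (!![a, 1; 1, 0].map C - (X : R⟦X⟧) • 1 -
        (single (0 : Fin 2) () (1 : R) * c).map C * M.powerSeriesOfPowers *
          (single o (0 : Fin 2) (1 : R)).map C) =
      -(1 + X * (C a - X - mk fun n => (c * M ^ n) () o)) := by
  have hcorner : (single (0 : Fin 2) () (1 : R) * c).map C * M.powerSeriesOfPowers *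
      (single o (0 : Fin 2) (1 : R)).map C = single 0 0 (mk fun n => (c * M ^ n) () o) := by
    rw [Matrix.map_mul, map_single, map_single, map_one, Matrix.mul_assoc (single _ _ _),
      single_mul_mul_single, one_mul, mul_one]
    congr 1
    ext n
    rw [coeff_mk, coeff_map_C_mul_powerSeriesOfPowers]
  rw [hcorner, det_fin_two]
  simp
  ring

end Matrix

theorem PowerSeries.one_sub_X_mul_mk_partialSums {R : Type*} [CommRing R] (a : R) (s : ℕ → R) :
    (1 - X) * (mk (fun k => 1 - a + ∑ ℓ ∈ Finset.range k, s ℓ) + C a + X) =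
      1 + X * (C (1 - a) - X + mk s) := by
  ext (_ | _ | n) <;> simp [sub_mul, coeff_X, coeff_one, coeff_succ_X_mul, Finset.sum_range_succ]
  ring

open Matrix in
theorem det_one_sub_X_smul_eq_mul_of_bordered {ι R : Type*} [Fintype ι] [DecidableEq ι]
    [CommRing R] {N N' : Matrix (ι ⊕ Unit) (ι ⊕ Unit) R} {T T' : Matrix (ι ⊕ Fin 2) (ι ⊕ Fin 2) R}
    (hN'N : N' * N = 1) (hT'T : T' * T = 1) (hN₁₂ : N.toBlocks₁₂ = 0) (hN₂₂ : N.toBlocks₂₂ = 1)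
    (hN'₁₂ : N'.toBlocks₁₂ = 0) {o : ι} {g : R} {s : ℕ → R}
    (hs : ∀ n, (N.toBlocks₂₁ * (N' ^ n).toBlocks₁₁) () o = -s n)
    (hT : T = fromBlocks N.toBlocks₁₁ (N.toBlocks₁₁ * single o (0 : Fin 2) (1 : R))
      (single (0 : Fin 2) () (1 : R) * N.toBlocks₂₁) !![1 - g, 1; 1, 0]) :
    det (1 - (X : R⟦X⟧) • T'.map C) = det (1 - (X : R⟦X⟧) • N'.map C) *
      (mk (fun k => 1 - g + ∑ ℓ ∈ Finset.range k, s ℓ) + C g + X) := by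
  set Q := mk (fun k => 1 - g + ∑ ℓ ∈ Finset.range k, s ℓ) + C g + X
  have hAA' : N.toBlocks₁₁ * N'.toBlocks₁₁ = 1 := by
    rw [← toBlocks₁₁_mul_of_toBlocks₁₂_eq_zero hN₁₂, mul_eq_one_comm.mp hN'N]
    ext i j
    simp [toBlocks₁₁, one_apply]
  have hdetN : det (N.map C - (X : R⟦X⟧) • 1) =
      det (N.toBlocks₁₁.map C - (X : R⟦X⟧) • 1) * (1 - X) := by
    conv_lhs => rw [← fromBlocks_toBlocks N, hN₁₂, hN₂₂]
    rw [det_fromBlocks_zero₁₂_map_C_sub_X_smul]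
    simp
  have hcorner : (mk fun n => (N.toBlocks₂₁ * N'.toBlocks₁₁ ^ n) () o) = -mk s := by
    ext n
    simp [← toBlocks₁₁_pow_of_toBlocks₁₂_eq_zero hN'₁₂, hs]
  have hdetT : det (T.map C - (X : R⟦X⟧) • 1) = det (N.map C - (X : R⟦X⟧) • 1) * -Q := by
    rw [hT, det_fromBlocks_map_C_sub_X_smul hAA',
      det_fin_two_sub_single_mul_powerSeriesOfPowers_mul_single, hcorner, hdetN]
    linear_combination det (N.toBlocks₁₁.map C - (X : R⟦X⟧) • 1) *
      PowerSeries.one_sub_X_mul_mk_partialSums g s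
  have hQ : constantCoeff Q = 1 := by simp [Q]
  have := det_one_sub_X_smul_mul_C_constantCoeff hT'T hN'N hdetT
  rwa [map_neg, hQ, map_neg, map_one, mul_neg, mul_one, mul_neg, neg_inj] at this

section Lattice

variable {V : Type*} [AddCommGroup V] [Module ℤ V] (B : V →ₗ[ℤ] V →ₗ[ℤ] ℤ)

def isometriesFixingOrth (s : Set V) : Submonoid (Function.End V) where
  carrier := {f | (∀ x y, B (f x) (f y) = B x y) ∧ ∀ x, (∀ a ∈ s, B x a = 0) → f x = x}
  mul_mem' := by
    rintro f g ⟨hfB, hf⟩ ⟨hgB, hg⟩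
    exact ⟨fun x y => (hfB (g x) (g y)).trans (hgB x y),
      fun x hx => (congrArg f (hg x hx)).trans (hf x hx)⟩
  one_mem' := ⟨fun _ _ => rfl, fun _ _ => rfl⟩

variable {B}

theorem sRefl_mem_isometriesFixingOrth (hsymm : ∀ x y, B x y = B y x) {s : Set V} {a : V}
    (ha : a ∈ s) (hroot : B a a = -2) : sRefl B a ∈ isometriesFixingOrth B s := by
  refine ⟨fun x y => ?_, fun x hx => by simp [sRefl, hx a ha]⟩
  simp only [sRefl, map_add, map_zsmul, LinearMap.add_apply, LinearMap.smul_apply, smul_eq_mul,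
    hroot, hsymm a y]
  ring

theorem foldr_sRefl_mem_isometriesFixingOrth (hsymm : ∀ x y, B x y = B y x) {n : ℕ}
    (a : Fin n → V) (hroot : ∀ i, B (a i) (a i) = -2) :
    (List.ofFn fun i => sRefl B (a i)).foldr (· ∘ ·) id ∈ isometriesFixingOrth B (Set.range a) :=
  Submonoid.list_prod_mem (l := List.ofFn (α := Function.End V) fun i => sRefl B (a i)) _
    fun f hf => by
      obtain ⟨i, rfl⟩ := List.mem_ofFn.mp hf
      exact sRefl_mem_isometriesFixingOrth hsymm ⟨i, rfl⟩ (hroot i)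

theorem sRefl_of_orthogonal {a x : V} (hx : B x a = 0) : sRefl B a x = x := by
  simp [sRefl, hx]

theorem sRefl_sub_left {u w : V} (huu : B u u = 0) (huw : B u w = 1) :
    sRefl B (u - w) u = w := by
  simp [sRefl, huu, huw]

theorem sRefl_sub_right (hsymm : ∀ x y, B x y = B y x) {u w : V} (hww : B w w = 0)
    (huw : B u w = 1) : sRefl B (u - w) w = u := by
  simp [sRefl, hww, hsymm w u, huw]

theorem esT_isometry (hsymm : ∀ x y, B x y = B y x) {u e : V} (huu : B u u = 0)
    (heu : B e u = 0) (heven : Even (B e e)) (x y : V) :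
    B (esT B u e x) (esT B u e y) = B x y := by
  obtain ⟨k, hk⟩ := heven
  unfold esT
  rw [show B e e / 2 = k by omega]
  simp only [map_add, map_sub, map_zsmul, LinearMap.add_apply, LinearMap.sub_apply,
    LinearMap.smul_apply, smul_eq_mul, huu, heu, hsymm u e, hsymm u y, hsymm e y, hk]
  ring

theorem esT_of_isotropic {u e : V} (huu : B u u = 0) (hue : B u e = 0) : esT B u e u = u := by
  simp [esT, huu, hue]

theorem esT_sub {u e w : V} (heu : B e u = 0) (hwu : B w u = 1) (hwe : B w e = 0)
    (heven : Even (B e e)) : esT B u e (w - e) = w + (B e e / 2) • u := by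
  obtain ⟨k, hk⟩ := heven
  unfold esT
  rw [show B e e / 2 = k by omega]
  simp only [map_sub, LinearMap.sub_apply, heu, hwu, hwe, hk, sub_zero, mul_one, one_zsmul,
    zero_sub, neg_zsmul, add_zsmul]
  abel

section CompEsT

variable {s : Set V} {f : Function.End V} {τ : V ≃ₗ[ℤ] V} {u e : V}

theorem isometry_of_eq_comp_esT (hf : f ∈ isometriesFixingOrth B s)
    (hτ : ∀ x, τ x = f (esT B u e x)) (hsymm : ∀ x y, B x y = B y x) (huu : B u u = 0)
    (heu : B e u = 0) (heven : Even (B e e)) (x y : V) : B (τ x) (τ y) = B x y := by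
  rw [hτ, hτ, hf.1, esT_isometry hsymm huu heu heven]

theorem apply_eq_self_of_eq_comp_esT (hf : f ∈ isometriesFixingOrth B s)
    (hτ : ∀ x, τ x = f (esT B u e x)) (huu : B u u = 0) (hue : B u e = 0)
    (hus : ∀ a ∈ s, B u a = 0) : τ u = u := by
  rw [hτ, esT_of_isotropic huu hue, hf.2 u hus]

theorem apply_sub_of_eq_comp_esT (hf : f ∈ isometriesFixingOrth B s)
    (hτ : ∀ x, τ x = f (esT B u e x)) {w : V} (heu : B e u = 0) (hwu : B w u = 1)
    (hwe : B w e = 0) (heven : Even (B e e)) (hus : ∀ a ∈ s, B u a = 0)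
    (hws : ∀ a ∈ s, B w a = 0) : τ (w - e) = w + (B e e / 2) • u := by
  rw [hτ, esT_sub heu hwu hwe heven]
  exact hf.2 _ fun a ha => by simp [hus a ha, hws a ha]

end CompEsT

theorem LinearEquiv.isometry_iterate {τ : V ≃ₗ[ℤ] V} (hτ : ∀ x y, B (τ x) (τ y) = B x y)
    (n : ℕ) (x y : V) : B (τ^[n] x) (τ^[n] y) = B x y := by
  induction n generalizing x y with
  | zero => rfl
  | succ n ih => rw [Function.iterate_succ_apply, Function.iterate_succ_apply, ih, hτ]

end Lattice

theorem Module.Basis.repr_map_eq_mapDomain {ι κ R M M' : Type*} [CommSemiring R]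
    [AddCommMonoid M] [Module R M] [AddCommMonoid M'] [Module R M'] (b : Module.Basis ι R M)
    (b' : Module.Basis κ R M') (f : M →ₗ[R] M') (σ : ι → κ) (h : ∀ i, f (b i) = b' (σ i))
    (x : M) : b'.repr (f x) = (b.repr x).mapDomain σ := by
  have : b'.repr.toLinearMap ∘ₗ f = Finsupp.lmapDomain R R σ ∘ₗ b.repr.toLinearMap :=
    b.ext fun i => by simp [h]
  exact LinearMap.congr_fun this x

theorem Module.Basis.sum_repr_mul_eq {ι R M : Type*} [CommSemiring R] [Fintype ι]
    [AddCommMonoid M] [Module R M] (b : Module.Basis ι R M) (φ : M →ₗ[R] R) (x : M) :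
    ∑ i, b.repr x i * φ (b i) = φ x := by
  conv_rhs => rw [← b.sum_repr x, map_sum]
  simp only [map_smul, smul_eq_mul]

section BasisBlocks

variable {ι κ R M : Type*} [Fintype ι] [DecidableEq ι] [Fintype κ] [DecidableEq κ] [CommRing R]
  [AddCommGroup M] [Module R M]

theorem LinearMap.toMatrix_inv_mul_toMatrix (b : Module.Basis ι R M) (f : M ≃ₗ[R] M) :
    toMatrix b b (f⁻¹ : M ≃ₗ[R] M).toLinearMap * toMatrix b b f.toLinearMap = 1 := by
  rw [← LinearMap.toMatrix_comp, ← LinearMap.toMatrix_id b]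
  congr 1
  ext x
  exact f.symm_apply_apply x

theorem toMatrix_toBlocks₁₂_eq_zero (b : Module.Basis (ι ⊕ κ) R M) {f : M →ₗ[R] M}
    (hf : ∀ k, f (b (.inr k)) = b (.inr k)) : (LinearMap.toMatrix b b f).toBlocks₁₂ = 0 := by
  ext i k
  simp [Matrix.toBlocks₁₂, LinearMap.toMatrix_apply, hf]

theorem toMatrix_toBlocks₂₂_eq_one (b : Module.Basis (ι ⊕ κ) R M) {f : M →ₗ[R] M}
    (hf : ∀ k, f (b (.inr k)) = b (.inr k)) : (LinearMap.toMatrix b b f).toBlocks₂₂ = 1 := by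
  ext k k'
  simp [Matrix.toBlocks₂₂, LinearMap.toMatrix_apply, hf, Matrix.one_apply, Finsupp.single_apply,
    eq_comm]

end BasisBlocks

section Setting

variable {ι Vp V0 : Type*} [AddCommGroup Vp] [Module ℤ Vp] [AddCommGroup V0] [Module ℤ V0]
  {bp : Module.Basis (ι ⊕ Fin 2) ℤ Vp} {b0 : Module.Basis (ι ⊕ Unit) ℤ V0} {incl : V0 →ₗ[ℤ] Vp}

theorem sum_map_id_const_injective (k : Fin 2) :
    Function.Injective (Sum.map id fun _ => k : ι ⊕ Unit → ι ⊕ Fin 2) :=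
  Sum.map_injective.mpr ⟨Function.injective_id, fun _ _ _ => rfl⟩

theorem repr_incl_eq_mapDomain (hincl₁ : ∀ j, incl (b0 (.inl j)) = bp (.inl j))
    (hincl₂ : incl (b0 (.inr ())) = bp (.inr 0)) (y : V0) :
    bp.repr (incl y) = (b0.repr y).mapDomain (Sum.map id fun _ => 0) :=
  b0.repr_map_eq_mapDomain bp incl _ (fun | .inl j => hincl₁ j | .inr () => hincl₂) y

theorem incl_injective (hincl₁ : ∀ j, incl (b0 (.inl j)) = bp (.inl j))
    (hincl₂ : incl (b0 (.inr ())) = bp (.inr 0)) : Function.Injective incl := fun y y' h =>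
  b0.repr.injective <| Finsupp.mapDomain_injective (sum_map_id_const_injective 0) <| by
    rw [← repr_incl_eq_mapDomain hincl₁ hincl₂, ← repr_incl_eq_mapDomain hincl₁ hincl₂, h]

theorem repr_incl_inl (hincl₁ : ∀ j, incl (b0 (.inl j)) = bp (.inl j))
    (hincl₂ : incl (b0 (.inr ())) = bp (.inr 0)) (y : V0) (j : ι) :
    bp.repr (incl y) (.inl j) = b0.repr y (.inl j) := by
  rw [repr_incl_eq_mapDomain hincl₁ hincl₂]
  exact Finsupp.mapDomain_apply (sum_map_id_const_injective 0) _ (.inl j)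

theorem repr_incl_inr_zero (hincl₁ : ∀ j, incl (b0 (.inl j)) = bp (.inl j))
    (hincl₂ : incl (b0 (.inr ())) = bp (.inr 0)) (y : V0) :
    bp.repr (incl y) (.inr 0) = b0.repr y (.inr ()) := by
  rw [repr_incl_eq_mapDomain hincl₁ hincl₂]
  exact Finsupp.mapDomain_apply (sum_map_id_const_injective 0) _ (.inr ())

theorem repr_incl_inr_one (hincl₁ : ∀ j, incl (b0 (.inl j)) = bp (.inl j))
    (hincl₂ : incl (b0 (.inr ())) = bp (.inr 0)) (y : V0) :
    bp.repr (incl y) (.inr 1) = 0 := by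
  rw [repr_incl_eq_mapDomain hincl₁ hincl₂]
  exact Finsupp.mapDomain_of_notMem_range _ _ (by rintro ⟨_ | _, h⟩ <;> simp at h)

theorem repr_inr_zero_eq {B : Vp →ₗ[ℤ] Vp →ₗ[ℤ] ℤ}
    (horth : ∀ j k, B (bp (.inl j)) (bp (.inr k)) = 0) (huw : B (bp (.inr 0)) (bp (.inr 1)) = 1)
    (hww : B (bp (.inr 1)) (bp (.inr 1)) = 0) (x : Vp) :
    bp.repr x (.inr 0) = B x (bp (.inr 1)) := by
  have : bp.coord (.inr 0) = B.flip (bp (.inr 1)) := bp.ext fun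
    | .inl j => by simp [horth]
    | .inr k => by fin_cases k <;> simp [huw, hww]
  exact LinearMap.congr_fun this x

variable [Fintype ι] [DecidableEq ι]

open Matrix in
theorem toMatrix_eq_fromBlocks (hincl₁ : ∀ j, incl (b0 (.inl j)) = bp (.inl j))
    (hincl₂ : incl (b0 (.inr ())) = bp (.inr 0)) {τp : Vp →ₗ[ℤ] Vp} {τ00 : V0 →ₗ[ℤ] V0}
    {o : ι} {k : ℤ} (hτp_inl : ∀ j, τp (bp (.inl j)) = incl (τ00 (b0 (.inl j))))
    (hτp_u : τp (bp (.inr 0)) = incl (τ00 (b0 (.inl o))) + bp (.inr 1) + k • bp (.inr 0))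
    (hτp_w : τp (bp (.inr 1)) = bp (.inr 0)) :
    LinearMap.toMatrix bp bp τp =
      fromBlocks (LinearMap.toMatrix b0 b0 τ00).toBlocks₁₁
        ((LinearMap.toMatrix b0 b0 τ00).toBlocks₁₁ * single o (0 : Fin 2) (1 : ℤ))
        (single (0 : Fin 2) () (1 : ℤ) * (LinearMap.toMatrix b0 b0 τ00).toBlocks₂₁)
        !![LinearMap.toMatrix b0 b0 τ00 (.inr ()) (.inl o) + k, 1; 1, 0] := by
  ext (i | i) (j | j)
  · simp [LinearMap.toMatrix_apply, toBlocks₁₁, hτp_inl, repr_incl_inl hincl₁ hincl₂]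
  · fin_cases j <;>
      simp [LinearMap.toMatrix_apply, toBlocks₁₁, hτp_u, hτp_w, repr_incl_inl hincl₁ hincl₂]
  · fin_cases i <;>
      simp [LinearMap.toMatrix_apply, toBlocks₂₁, hτp_inl, repr_incl_inr_zero hincl₁ hincl₂,
        repr_incl_inr_one hincl₁ hincl₂]
  · fin_cases i <;> fin_cases j <;>
      simp [LinearMap.toMatrix_apply, hτp_u, hτp_w, repr_incl_inr_zero hincl₁ hincl₂,
        repr_incl_inr_one hincl₁ hincl₂]

/-- The `u`-coordinate is the pairing with `w`, and `w = τ₀ (w - e - k u)`. -/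
theorem toMatrix_inr_inl_eq (hincl₁ : ∀ j, incl (b0 (.inl j)) = bp (.inl j))
    (hincl₂ : incl (b0 (.inr ())) = bp (.inr 0)) {B : Vp →ₗ[ℤ] Vp →ₗ[ℤ] ℤ}
    (horth : ∀ j k, B (bp (.inl j)) (bp (.inr k)) = 0) (huw : B (bp (.inr 0)) (bp (.inr 1)) = 1)
    (hww : B (bp (.inr 1)) (bp (.inr 1)) = 0) {τ0 : Vp ≃ₗ[ℤ] Vp} {τ00 : V0 →ₗ[ℤ] V0}
    (hτ00 : ∀ x, incl (τ00 x) = τ0 (incl x)) (hiso : ∀ x y, B (τ0 x) (τ0 y) = B x y) {o : ι}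
    {k : ℤ} (hτ0u : τ0 (bp (.inr 0)) = bp (.inr 0))
    (hτ0w : τ0 (bp (.inr 1) - bp (.inl o)) = bp (.inr 1) + k • bp (.inr 0)) (j : ι) :
    LinearMap.toMatrix b0 b0 τ00 (.inr ()) (.inl j) = -B (bp (.inl j)) (bp (.inl o)) := by
  have hw : bp (.inr 1) = τ0 (bp (.inr 1) - bp (.inl o) - k • bp (.inr 0)) := by
    rw [map_sub, hτ0w, map_zsmul, hτ0u, add_sub_cancel_right]
  rw [LinearMap.toMatrix_apply, ← repr_incl_inr_zero hincl₁ hincl₂, hτ00, hincl₁,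
    repr_inr_zero_eq horth huw hww, hw, hiso]
  simp [horth]

theorem toBlocks₂₁_mul_pow_toBlocks₁₁_apply (hincl₁ : ∀ j, incl (b0 (.inl j)) = bp (.inl j))
    (hincl₂ : incl (b0 (.inr ())) = bp (.inr 0)) {B : Vp →ₗ[ℤ] Vp →ₗ[ℤ] ℤ} {o : ι}
    (hue : B (bp (.inr 0)) (bp (.inl o)) = 0) {τ0 : Vp ≃ₗ[ℤ] Vp} {τ00 : V0 ≃ₗ[ℤ] V0}
    (hτ00 : ∀ x, incl (τ00 x) = τ0 (incl x)) (hiso : ∀ x y, B (τ0 x) (τ0 y) = B x y)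
    (hc : ∀ j, LinearMap.toMatrix b0 b0 τ00 (.inr ()) (.inl j) = -B (bp (.inl j)) (bp (.inl o)))
    (n : ℕ) :
    ((LinearMap.toMatrix b0 b0 τ00).toBlocks₂₁ *
        (LinearMap.toMatrix b0 b0 (τ00⁻¹ : V0 ≃ₗ[ℤ] V0).toLinearMap ^ n).toBlocks₁₁) () o =
      -B (bp (.inl o)) (τ0^[n] (bp (.inl o))) := by
  set y := (⇑(τ00⁻¹ : V0 ≃ₗ[ℤ] V0))^[n] (b0 (.inl o))
  have hy : incl (τ00^[n] y) = bp (.inl o) :=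
    (congrArg incl (Function.LeftInverse.iterate τ00.apply_symm_apply n _)).trans (hincl₁ o)
  have hsum : ∑ j, b0.repr y (.inl j) * B (bp (.inl j)) (bp (.inl o)) =
      B (incl y) (bp (.inl o)) := by
    have := b0.sum_repr_mul_eq (B.flip (bp (.inl o)) ∘ₗ incl) y
    rw [Fintype.sum_sum_type] at this
    simpa [hincl₁, hincl₂, hue] using this
  calc ((LinearMap.toMatrix b0 b0 τ00).toBlocks₂₁ *
        (LinearMap.toMatrix b0 b0 (τ00⁻¹ : V0 ≃ₗ[ℤ] V0).toLinearMap ^ n).toBlocks₁₁) () o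
      = -∑ j, b0.repr y (.inl j) * B (bp (.inl j)) (bp (.inl o)) := by
        simp [Matrix.mul_apply, Matrix.toBlocks₂₁, Matrix.toBlocks₁₁, LinearMap.toMatrix_pow,
          LinearMap.toMatrix_apply, Module.End.pow_apply, hc, y, mul_comm]
    _ = -B (τ0^[n] (incl y)) (τ0^[n] (bp (.inl o))) := by
        rw [hsum, LinearEquiv.isometry_iterate hiso]
    _ = -B (bp (.inl o)) (τ0^[n] (bp (.inl o))) := by
        rw [← (Function.Semiconj.iterate_right hτ00 n) y, hy]

end Setting

/-- with `V₋` an even lattice with basis `e_1, …, e_m, e` (the `e_i`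
roots, `⟨e,e⟩ = 2g−2`), `V₀ = V₋ ⊕ ℤu`, `V₊ = V₋ ⊕ U`,
`τ₀ = s_{e_1} ∘ ⋯ ∘ s_{e_m} ∘ ψ_{u,e}` and `τ₊ = τ₀ ∘ s_{u−w}`, one has in `ℤ[[t]]`:
`det(id − t·τ₊⁻¹) = det(id − t·(τ₀|_{V₀})⁻¹) · (g + t + Σ_{k≥0} (1 − g + Σ_{ℓ=0}^{k−1} ⟨e, τ₀^ℓ(e)⟩) t^k)`,
i.e. the quotient of the two determinants is `P_{(V₀,e)}(t) + g + t`. -/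
theorem stmt11 {Vp V0 : Type*} [AddCommGroup Vp] [Module ℤ Vp]
    [AddCommGroup V0] [Module ℤ V0]
    (m : ℕ) (g : ℤ)
    (bp : Module.Basis ((Fin m ⊕ Unit) ⊕ Fin 2) ℤ Vp)
    (b0 : Module.Basis ((Fin m ⊕ Unit) ⊕ Unit) ℤ V0)
    (B : Vp →ₗ[ℤ] Vp →ₗ[ℤ] ℤ)
    (hsymm : ∀ x y, B x y = B y x)
    (heven : ∀ x, Even (B x x))
    (hroot : ∀ i : Fin m, B (bp (.inl (.inl i))) (bp (.inl (.inl i))) = -2)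
    (hg : B (bp (.inl (.inr ()))) (bp (.inl (.inr ()))) = 2 * g - 2)
    (huu : B (bp (.inr 0)) (bp (.inr 0)) = 0)
    (hww : B (bp (.inr 1)) (bp (.inr 1)) = 0)
    (huw : B (bp (.inr 0)) (bp (.inr 1)) = 1)
    (horth : ∀ (j : Fin m ⊕ Unit) (k : Fin 2), B (bp (.inl j)) (bp (.inr k)) = 0)
    (incl : V0 →ₗ[ℤ] Vp)
    (hincl1 : ∀ j : Fin m ⊕ Unit, incl (b0 (.inl j)) = bp (.inl j))
    (hincl2 : incl (b0 (.inr ())) = bp (.inr 0))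
    (τ0 : Vp ≃ₗ[ℤ] Vp)
    (hτ0 : ∀ x, τ0 x =
      ((List.ofFn fun i : Fin m => sRefl B (bp (.inl (.inl i)))).foldr (· ∘ ·) id)
        (esT B (bp (.inr 0)) (bp (.inl (.inr ()))) x))
    (τ00 : V0 ≃ₗ[ℤ] V0)
    (hτ00 : ∀ x : V0, incl (τ00 x) = τ0 (incl x))
    (τp : Vp ≃ₗ[ℤ] Vp)
    (hτp : ∀ x, τp x = τ0 (sRefl B (bp (.inr 0) - bp (.inr 1)) x)) :
    detOneSubT bp (τp⁻¹ : Vp ≃ₗ[ℤ] Vp).toLinearMap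
      = detOneSubT b0 (τ00⁻¹ : V0 ≃ₗ[ℤ] V0).toLinearMap *
        ((PowerSeries.mk fun k : ℕ =>
            1 - g + ∑ ℓ ∈ Finset.range k,
              B (bp (.inl (.inr ()))) ((τ0 ^ ℓ) (bp (.inl (.inr ())))))
          + (PowerSeries.C (R := ℤ)) g + PowerSeries.X) := by
  have horth' : ∀ j k, B (bp (.inr k)) (bp (.inl j)) = 0 := fun j k =>
    (hsymm _ _).trans (horth j k)
  have horthRoots : ∀ k, ∀ a ∈ Set.range fun i : Fin m => bp (.inl (.inl i)),
      B (bp (.inr k)) a = 0 := fun k => Set.forall_mem_range.2 fun i => horth' _ k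
  have hRf := foldr_sRefl_mem_isometriesFixingOrth hsymm _ hroot
  have hiso := isometry_of_eq_comp_esT hRf hτ0 hsymm huu (horth _ 0) (heven _)
  have hτ0u := apply_eq_self_of_eq_comp_esT hRf hτ0 huu (horth' _ 0) (horthRoots 0)
  have hτ0w := apply_sub_of_eq_comp_esT hRf hτ0 (horth _ 0) ((hsymm _ _).trans huw) (horth' _ 1)
    (heven _) (horthRoots 0) (horthRoots 1)
  have hτ00u : τ00 (b0 (.inr ())) = b0 (.inr ()) :=
    incl_injective hincl1 hincl2 (by rw [hτ00, hincl2, hτ0u])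
  have hc := toMatrix_inr_inl_eq hincl1 hincl2 horth huw hww (τ00 := τ00.toLinearMap) hτ00 hiso
    hτ0u hτ0w
  have hτp_inl : ∀ j, τp (bp (.inl j)) = incl (τ00 (b0 (.inl j))) := fun j => by
    rw [hτp, sRefl_of_orthogonal (by simp [horth]), hτ00, hincl1]
  have hτp_u : τp (bp (.inr 0)) = incl (τ00 (b0 (.inl (.inr ())))) + bp (.inr 1) +
      (B (bp (.inl (.inr ()))) (bp (.inl (.inr ()))) / 2) • bp (.inr 0) := by
    rw [hτp, sRefl_sub_left huu huw, hτ00, hincl1, add_assoc, ← hτ0w, ← map_add, add_sub_cancel]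
  have hτp_w : τp (bp (.inr 1)) = bp (.inr 0) := by
    rw [hτp, sRefl_sub_right hsymm hww huw, hτ0u]
  refine det_one_sub_X_smul_eq_mul_of_bordered (o := .inr ())
    (LinearMap.toMatrix_inv_mul_toMatrix b0 τ00) (LinearMap.toMatrix_inv_mul_toMatrix bp τp)
    (toMatrix_toBlocks₁₂_eq_zero b0 fun _ => hτ00u) (toMatrix_toBlocks₂₂_eq_one b0 fun _ => hτ00u)
    (toMatrix_toBlocks₁₂_eq_zero b0 fun _ => τ00.symm_apply_eq.mpr hτ00u.symm) (fun n => ?_) ?_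
  · rw [toBlocks₂₁_mul_pow_toBlocks₁₁_apply hincl1 hincl2 (horth' _ 0) hτ00 hiso hc,
      LinearEquiv.pow_apply]
  · rw [toMatrix_eq_fromBlocks hincl1 hincl2 hτp_inl hτp_u hτp_w, hc, hg,
      show -(2 * g - 2) + (2 * g - 2) / 2 = 1 - g by omega]
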